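/- arXiv:2008.12536 — 2 statements merged into one kernel-verified Lean document; each statement's English description precedes it below -/
import Mathlib

section
/- Let R be an integral domain and M a finitely generated torsion-free R-module. If {P_i}_{i∈I} is an infinite collection of prime ideals of R with ⋂_{i∈I} P_i = {0}, then ⋂_{i∈I} P_i·M = {0}. -/
/-!
A finitely generated torsion-free module `M` over a domain has `c • M` inside a free submodule
for some `c ≠ 0` (the span of a maximal linearly independent subset of generators), so linear
functionals `M → R` separate points. A functional maps `P • M` into `P`, hence maps `⋂ Pᵢ • M`
into `⋂ Pᵢ = 0`.
-/

open Submodule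

section

variable {R M : Type*} [CommRing R] [AddCommGroup M] [Module R M]

theorem iInf_ideal_smul_top_eq_bot_of_dual_separating {ι : Type*} {I : ι → Ideal R}
    (hI : ⨅ i, I i = ⊥) (hM : ∀ x : M, x ≠ 0 → ∃ f : Module.Dual R M, f x ≠ 0) :
    ⨅ i, I i • (⊤ : Submodule R M) = ⊥ := by
  refine eq_bot_iff.2 fun x hx => (mem_bot R).2 <| by_contra fun hx0 => ?_
  obtain ⟨f, hfx⟩ := hM x hx0
  have hfI : ∀ i, f x ∈ I i := fun i => by
    simpa using smul_top_le_comap_smul_top (I i) f ((mem_iInf _).1 hx i)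
  exact hfx <| by simpa [hI] using (mem_iInf I).2 hfI

theorem exists_ne_zero_forall_smul_mem_of_span_eq_top [IsDomain R] {ι : Type*} [Finite ι]
    {v : ι → M} (hv : span R (Set.range v) = ⊤) {N : Submodule R M}
    (h : ∀ i, ∃ a : R, a ≠ 0 ∧ a • v i ∈ N) : ∃ c : R, c ≠ 0 ∧ ∀ x : M, c • x ∈ N := by
  classical
  cases nonempty_fintype ι
  choose a ha hav using h
  refine ⟨∏ i, a i, Finset.prod_ne_zero_iff.2 fun i _ => ha i, fun x => ?_⟩
  suffices span R (Set.range v) ≤ N.comap (LinearMap.lsmul R M (∏ i, a i)) from this (hv ▸ mem_top)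
  refine span_le.2 <| Set.range_subset_iff.2 fun i => ?_
  rw [SetLike.mem_coe, mem_comap, LinearMap.lsmul_apply,
    ← Finset.prod_erase_mul _ _ (Finset.mem_univ i), mul_smul]
  exact N.smul_mem _ (hav i)

theorem Module.Finite.exists_linearIndepOn_smul_mem_span [IsDomain R] [Module.Finite R M] :
    ∃ s : Set M, LinearIndepOn R id s ∧ ∃ c : R, c ≠ 0 ∧ ∀ x : M, c • x ∈ span R s := by
  obtain ⟨n, v, hv⟩ := Module.Finite.exists_fin (R := R) (M := M)
  obtain ⟨s, hs, hmax⟩ := exists_maximal_linearIndepOn R v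
  refine ⟨v '' s, hs.id_image, exists_ne_zero_forall_smul_mem_of_span_eq_top hv fun i => ?_⟩
  by_cases hi : i ∈ s
  · exact ⟨1, one_ne_zero, by simpa using subset_span (Set.mem_image_of_mem v hi)⟩
  · exact hmax i hi

theorem Module.Finite.exists_dual_apply_ne_zero [IsDomain R] [Module.Finite R M]
    [Module.IsTorsionFree R M] {x : M} (hx : x ≠ 0) : ∃ f : Module.Dual R M, f x ≠ 0 := by
  obtain ⟨s, hs, c, hc, hcM⟩ := Module.Finite.exists_linearIndepOn_smul_mem_span (R := R) (M := M)
  rw [← Subtype.range_coe (s := s)] at hcM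
  let b := Module.Basis.span (R := R) (v := ((↑) : s → M)) hs
  let φ : M →ₗ[R] span R (Set.range ((↑) : s → M)) := (LinearMap.lsmul R M c).codRestrict _ hcM
  have hφx : φ x ≠ 0 := fun h => smul_ne_zero hc hx (congrArg Subtype.val h)
  obtain ⟨k, hk⟩ : ∃ k, b.coord k (φ x) ≠ 0 := by
    by_contra! h
    exact hφx (b.forall_coord_eq_zero_iff.1 h)
  exact ⟨b.coord k ∘ₗ φ, hk⟩

end

theorem interiteration_of_prime_smul_eq_bot_general
    (R : Type*) [CommRing R] [IsDomain R]
    (M : Type*) [AddCommGroup M] [Module R M] [Module.Finite R M]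
    [NoZeroSMulDivisors R M]
    (I : Type*) (P : I → Ideal R)
    (hPint : (⨅ i, P i) = ⊥) :
    (⨅ i, (P i) • (⊤ : Submodule R M)) = ⊥ :=
  iInf_ideal_smul_top_eq_bot_of_dual_separating hPint fun _ =>
    Module.Finite.exists_dual_apply_ne_zero

/-- paper, Lemma `lemma_tor_free_means_finitely_divisible`.
Let `R` be an integral domain and `M` a finitely generated torsion-free `R`-module
(torsion-freeness is expressed by `NoZeroSMulDivisors R M`). If `{P i}_{i ∈ I}` is an
infinite collection of prime ideals of `R` with `⋂ i, P i = 0`, then `⋂ i, P i • M = 0`. -/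
theorem interiteration_of_prime_smul_eq_bot
    (R : Type*) [CommRing R] [IsDomain R]
    (M : Type*) [AddCommGroup M] [Module R M] [Module.Finite R M]
    [NoZeroSMulDivisors R M]
    (I : Type*) [Infinite I] (P : I → Ideal R) (hP : ∀ i, (P i).IsPrime)
    (hPint : (⨅ i, P i) = ⊥) :
    (⨅ i, (P i) • (⊤ : Submodule R M)) = ⊥ :=
  interiteration_of_prime_smul_eq_bot_general R M I P hPint
end

section
/- Let E be a field, e ≥ 1, R = E[Y] (polynomial ring, or a suitable quotient), and A = R[X]/(X^e − Y). Let M be a free A-module of rank d, x an E-point of Spec(A) corresponding to X ↦ X(x), and w(x) the induced point of Spec(R). Set M_{w(x)} = M ⊗_R R/m_{w(x)} and P_x(X) = (X^e − X(x)^e)/(X − X(x)) ∈ E[X]. Then multiplication by P_x(X) induces an isomorphism from M_x = M/m_x M onto M[x] := ker(X − X(x) : M_{w(x)} → M_{w(x)}). -/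
/-! In `E[X]/(X^e - a^e)` the polynomials `P_x = (X^e - a^e)/(X - a)` and `X - a` are
complementary factors of the modulus, and both are nonzero. Hence, in the quotient, the
annihilator of either one is the principal ideal generated by the other, and on the free
module `M_{w(x)}` everything happens coordinatewise. -/

set_option synthInstance.maxHeartbeats 1000000
set_option maxHeartbeats 1000000
open Polynomial

/-- The fiber algebra `E[X]/(X^e - b)`; for `b = a^e` this is the fiber
`A ⊗_R R/m_{w(x)}` of `A = R[X]/(X^e - Y)` over the weight `w(x)`. -/
abbrev FiberAlg (E : Type*) [Field E] (e : ℕ) (b : E) : Type _ :=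
  Polynomial E ⧸ Ideal.span {(X : Polynomial E) ^ e - C b}

/-- Multiplication by `q` on the free module `(E[X]/(X^e - b))^d`. -/
noncomputable def mulBy (E : Type*) [Field E] (e : ℕ) (b : E) (d : ℕ)
    (q : FiberAlg E e b) :
    (Fin d → FiberAlg E e b) →ₗ[FiberAlg E e b] (Fin d → FiberAlg E e b) :=
  LinearMap.lsmul (FiberAlg E e b) (Fin d → FiberAlg E e b) q

theorem Ideal.Quotient.mk_mul_eq_zero_iff_exists {R : Type*} [CommRing R] [IsDomain R]
    {f p g : R} (hf : p * g = f) (hg : g ≠ 0) (z : R ⧸ Ideal.span {f}) :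
    Ideal.Quotient.mk _ g * z = 0 ↔ ∃ w, Ideal.Quotient.mk _ p * w = z := by
  obtain ⟨q, rfl⟩ := Ideal.Quotient.mk_surjective z
  constructor
  · rw [← map_mul, Ideal.Quotient.eq_zero_iff_mem, Ideal.mem_span_singleton, ← hf,
      mul_comm p g, mul_dvd_mul_iff_left hg]
    rintro ⟨r, rfl⟩
    exact ⟨Ideal.Quotient.mk _ r, (map_mul _ p r).symm⟩
  · rintro ⟨w, hw⟩
    rw [← hw, ← mul_assoc, ← map_mul, mul_comm g p, hf,
      Ideal.Quotient.eq_zero_iff_mem.mpr (Ideal.mem_span_singleton_self f), zero_mul]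

theorem LinearMap.ker_lsmul_pi_eq_range_lsmul {S ι : Type*} [CommRing S] {s t : S}
    (h : ∀ z : S, s * z = 0 ↔ ∃ w, t * w = z) :
    LinearMap.ker (LinearMap.lsmul S (ι → S) s) =
      LinearMap.range (LinearMap.lsmul S (ι → S) t) := by
  ext v
  simp only [LinearMap.mem_ker, LinearMap.mem_range, LinearMap.lsmul_apply, funext_iff,
    Pi.smul_apply, smul_eq_mul, Pi.zero_apply, h]
  exact Classical.skolem

theorem Polynomial.geom_sum_mul_X_sub_C {E : Type*} [CommRing E] (e : ℕ) (a : E) :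
    (∑ i ∈ Finset.range e, X ^ i * C (a ^ (e - 1 - i))) * (X - C a) = X ^ e - C (a ^ e) := by
  simpa only [← C_pow] using geom_sum₂_mul (X : E[X]) (C a) e

/-- With `A = R[X]/(X^e - Y)`, `M` free of rank `d` over `A`, and `x` an
`E`-point with `X(x) = a` (so `M_{w(x)} ≅ (E[X]/(X^e - a^e))^d`), multiplication by
`P_x(X) = (X^e - a^e)/(X - a) = ∑_{i<e} X^i a^{e-1-i}` induces an isomorphism
`M_x = M_{w(x)}/(X - a) ≅ M[x] = ker(X - a)`: its range is `ker(X - a)` and its kernel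
is `(X - a)·M_{w(x)}`. -/
theorem mul_Px_induces_iso (E : Type*) [Field E] (e d : ℕ) (he : 1 ≤ e) (a : E) :
    (LinearMap.range (mulBy E e (a ^ e) d
        (Ideal.Quotient.mk (Ideal.span {(X : Polynomial E) ^ e - C (a ^ e)})
          (∑ i ∈ Finset.range e, X ^ i * C (a ^ (e - 1 - i)))))
      = LinearMap.ker (mulBy E e (a ^ e) d
        (Ideal.Quotient.mk (Ideal.span {(X : Polynomial E) ^ e - C (a ^ e)}) (X - C a))))
    ∧ (LinearMap.ker (mulBy E e (a ^ e) d
        (Ideal.Quotient.mk (Ideal.span {(X : Polynomial E) ^ e - C (a ^ e)})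
          (∑ i ∈ Finset.range e, X ^ i * C (a ^ (e - 1 - i)))))
      = LinearMap.range (mulBy E e (a ^ e) d
        (Ideal.Quotient.mk (Ideal.span {(X : Polynomial E) ^ e - C (a ^ e)}) (X - C a)))) := by
  have hfactor := geom_sum_mul_X_sub_C e a
  have hPx : ∑ i ∈ Finset.range e, X ^ i * C (a ^ (e - 1 - i)) ≠ 0 :=
    left_ne_zero_of_mul (hfactor ▸ (monic_X_pow_sub_C (a ^ e) (by omega)).ne_zero)
  exact ⟨(LinearMap.ker_lsmul_pi_eq_range_lsmul
      (Ideal.Quotient.mk_mul_eq_zero_iff_exists hfactor (X_sub_C_ne_zero a))).symm,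
    LinearMap.ker_lsmul_pi_eq_range_lsmul
      (Ideal.Quotient.mk_mul_eq_zero_iff_exists ((mul_comm _ _).trans hfactor) hPx)⟩
end
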